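/- Define the topological generating function Δ(z, d₁, d₂, d₃) = \sum_R d₁^{Δ₁(R)} d₂^{Δ₂(R)} d₃^{Δ₃(R)} z^{|R|} over all RANS R, where Δᵢ(R) is the sum over internal vertices x of R of the distance from x to the first i outermost vertices. Then Δ satisfies the functional equation Δ(z,d₁,d₂,d₃) = 1 + z d₁ d₂ d₃ · Δ(z d₁, d₂, d₃, d₁) · Δ(z, d₁, d₂ d₃, 1) · Δ(z, d₁ d₂, d₃, 1). -/

import Mathlib

/-- Rooted plane ternary trees, modeling RANS. -/
inductive Tern : Type
  | leaf : Tern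
  | node : Tern → Tern → Tern → Tern

/-- Order of a RANS (number of internal vertices). -/
def Tern.size : Tern → ℕ
  | .leaf => 0
  | .node a b c => 1 + a.size + b.size + c.size

/-- Sum, over the internal vertices of a RANS whose three outermost vertices
carry labels `a b c`, of the vertex labels, where the center gets label
`1 + min` of the outermost labels and labels propagate to the sub-RANS (the
label of an internal vertex is its graph distance to the nearest outermost
vertex with label 0). -/
def Tern.labelSum : Tern → ℕ → ℕ → ℕ → ℕ
  | .leaf, _, _, _ => 0
  | .node s₁ s₂ s₃, a, b, c =>
      let m := 1 + min a (min b c)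
      m + s₁.labelSum m b c + s₂.labelSum a m c + s₃.labelSum a b m

/-- `Δ₁(R)`: cumulated distance of internal vertices to the outermost vertex `O₁`. -/
def Tern.d1 (t : Tern) : ℕ := t.labelSum 0 1 1

/-- `Δ₂(R)`: cumulated distance of internal vertices to `{O₁, O₂}`. -/
def Tern.d2 (t : Tern) : ℕ := t.labelSum 0 0 1

/-- `Δ₃(R)`: cumulated distance of internal vertices to `{O₁, O₂, O₃}`. -/
def Tern.d3 (t : Tern) : ℕ := t.labelSum 0 0 0

open PowerSeries MvPolynomial

/-- Coefficient ring: polynomials in the three distance markers `d₁, d₂, d₃`. -/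
abbrev R3 : Type := MvPolynomial (Fin 3) ℚ

/-- Substitution `Δ(z d₁, d₂, d₃, d₁)` (first sub-RANS). -/
noncomputable def sub1 (F : PowerSeries R3) : PowerSeries R3 :=
  PowerSeries.mk fun n =>
    (MvPolynomial.X 0 : R3) ^ n *
      MvPolynomial.aeval ![(MvPolynomial.X 1 : R3), MvPolynomial.X 2, MvPolynomial.X 0]
        (PowerSeries.coeff n F)

/-- Substitution `Δ(z, d₁, d₂ d₃, 1)` (second sub-RANS). -/
noncomputable def sub2 (F : PowerSeries R3) : PowerSeries R3 :=
  PowerSeries.mk fun n =>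
    MvPolynomial.aeval ![(MvPolynomial.X 0 : R3), MvPolynomial.X 1 * MvPolynomial.X 2, 1]
      (PowerSeries.coeff n F)

/-- Substitution `Δ(z, d₁ d₂, d₃, 1)` (third sub-RANS). -/
noncomputable def sub3 (F : PowerSeries R3) : PowerSeries R3 :=
  PowerSeries.mk fun n =>
    MvPolynomial.aeval ![(MvPolynomial.X 0 * MvPolynomial.X 1 : R3), MvPolynomial.X 2, 1]
      (PowerSeries.coeff n F)

/-!
Removing the center `x` of `R` splits `R` into three sub-RANS, the `i`-th of which has `x` in
place of `Oᵢ`, and `x` is at distance `1` from every outermost vertex. Hence each of `Δ₁, Δ₂, Δ₃`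
of `R` is `1` plus label sums of the three sub-RANS whose outermost labels lie in `{0, 1}`
(`weight_node`). For the first sub-RANS the labels `(1, 1, 1)` occur, which give `Δ₃` shifted by
its size: this is the substitution `z ↦ z d₁`. Every other label pattern becomes `Δ₁` or `Δ₂` of
a sub-RANS after recursively permuting children (`swap12`, `swap23`), a size-preserving bijection
that permutes the labels.
-/

open Finset

theorem MvPolynomial.coeff_X_pow_mul_X_pow_mul_X_pow {R : Type*} [CommSemiring R]
    (a b c : ℕ) (m : Fin 3 →₀ ℕ) :
    coeff m (MvPolynomial.X 0 ^ a * MvPolynomial.X 1 ^ b * MvPolynomial.X 2 ^ c :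
        MvPolynomial (Fin 3) R) =
      if a = m 0 ∧ b = m 1 ∧ c = m 2 then 1 else 0 := by
  simp only [X_pow_eq_monomial, monomial_mul, one_mul, coeff_monomial]
  refine if_congr ⟨fun h => by simp [← h], ?_⟩ rfl rfl
  rintro ⟨rfl, rfl, rfl⟩
  ext i
  fin_cases i <;> simp

namespace Tern

def swap12 : Tern → Tern
  | leaf => leaf
  | node a b c => node (swap12 b) (swap12 a) (swap12 c)

def swap23 : Tern → Tern
  | leaf => leaf
  | node a b c => node (swap23 a) (swap23 c) (swap23 b)

theorem swap12_involutive : Function.Involutive swap12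
  | leaf => rfl
  | node a b c => by simp only [swap12, swap12_involutive a, swap12_involutive b,
      swap12_involutive c]

theorem swap23_involutive : Function.Involutive swap23
  | leaf => rfl
  | node a b c => by simp only [swap23, swap23_involutive a, swap23_involutive b,
      swap23_involutive c]

theorem size_swap12 : ∀ t, (swap12 t).size = t.size
  | leaf => rfl
  | node a b c => by simp only [swap12, size, size_swap12]; omega

theorem size_swap23 : ∀ t, (swap23 t).size = t.size
  | leaf => rfl
  | node a b c => by simp only [swap23, size, size_swap23]; omega

theorem labelSum_swap12 : ∀ t a b c, (swap12 t).labelSum a b c = t.labelSum b a c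
  | leaf, _, _, _ => rfl
  | node s₁ s₂ s₃, a, b, c => by
    simp only [swap12, labelSum, labelSum_swap12]
    rw [show min a (min b c) = min b (min a c) by omega]
    ring

theorem labelSum_swap23 : ∀ t a b c, (swap23 t).labelSum a b c = t.labelSum a c b
  | leaf, _, _, _ => rfl
  | node s₁ s₂ s₃, a, b, c => by
    simp only [swap23, labelSum, labelSum_swap23]
    rw [show min a (min b c) = min a (min c b) by omega]
    ring

theorem labelSum_add_one : ∀ (t : Tern) (a b c : ℕ),
    t.labelSum (a + 1) (b + 1) (c + 1) = t.labelSum a b c + t.size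
  | leaf, _, _, _ => rfl
  | node s₁ s₂ s₃, a, b, c => by
    simp only [labelSum, size]
    rw [show 1 + min (a + 1) (min (b + 1) (c + 1)) = 1 + min a (min b c) + 1 by omega,
      labelSum_add_one s₁, labelSum_add_one s₂, labelSum_add_one s₃]
    ring

theorem finite_setOf_size_le : ∀ n, {t : Tern | t.size ≤ n}.Finite
  | 0 => (Set.finite_singleton leaf).subset fun t ht => by
    cases t
    · rfl
    · simp only [Set.mem_ofPred_eq, size] at ht; omega
  | n + 1 => by
    have ih := finite_setOf_size_le n
    refine ((ih.prod (ih.prod ih)).image fun p => node p.1 p.2.1 p.2.2).insert leaf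
      |>.subset ?_
    rintro (_ | ⟨a, b, c⟩) ht
    · exact Set.mem_insert _ _
    · simp only [Set.mem_ofPred_eq, size] at ht
      refine Set.mem_insert_of_mem _ ⟨(a, b, c), ⟨?_, ?_, ?_⟩, rfl⟩ <;>
        simp only [Set.mem_ofPred_eq] <;> omega

noncomputable def ofSize (n : ℕ) : Finset Tern :=
  Set.Finite.toFinset (s := {t | t.size = n}) <|
    (finite_setOf_size_le n).subset fun _ (ht : _ = n) => ht.le

theorem mem_ofSize {n : ℕ} {t : Tern} : t ∈ ofSize n ↔ t.size = n := by
  rw [ofSize, Set.Finite.mem_toFinset, Set.mem_ofPred_eq]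

theorem ofSize_zero : ofSize 0 = {leaf} := by
  ext (_ | ⟨a, b, c⟩) <;> simp [mem_ofSize, size]

noncomputable def tripleOfSize (n : ℕ) : Finset (Tern × Tern × Tern) :=
  Set.Finite.toFinset (s := {p | p.1.size + p.2.1.size + p.2.2.size = n}) <|
    let h := finite_setOf_size_le n
    (h.prod (h.prod h)).subset fun p (hp : _ = n) =>
      ⟨(by omega : p.1.size ≤ n), (by omega : p.2.1.size ≤ n),
        (by omega : p.2.2.size ≤ n)⟩

theorem mem_tripleOfSize {n : ℕ} {p : Tern × Tern × Tern} :
    p ∈ tripleOfSize n ↔ p.1.size + p.2.1.size + p.2.2.size = n := by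
  rw [tripleOfSize, Set.Finite.mem_toFinset, Set.mem_ofPred_eq]

section Sums

variable {M : Type*} [AddCommMonoid M]

theorem sum_ofSize_succ (f : Tern → M) (n : ℕ) :
    ∑ t ∈ ofSize (n + 1), f t = ∑ p ∈ tripleOfSize n, f (node p.1 p.2.1 p.2.2) := by
  symm
  refine Finset.sum_nbij (fun p => node p.1 p.2.1 p.2.2) ?_ ?_ ?_ fun _ _ => rfl
  · intro p hp
    rw [mem_tripleOfSize] at hp
    rw [mem_ofSize, size]
    omega
  · intro p _ q _ h
    simp only [node.injEq] at h
    exact Prod.ext h.1 (Prod.ext h.2.1 h.2.2)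
  · rintro (_ | ⟨a, b, c⟩) ht
    · simp [mem_ofSize, size] at ht
    · rw [mem_coe, mem_ofSize, size] at ht
      exact ⟨(a, b, c), by rw [mem_coe, mem_tripleOfSize]; dsimp only; omega, rfl⟩

theorem sum_ofSize_comp_of_involutive (f : Tern → M) {g : Tern → Tern}
    (hg : Function.Involutive g) (hsize : ∀ t, (g t).size = t.size) (n : ℕ) :
    ∑ t ∈ ofSize n, f (g t) = ∑ t ∈ ofSize n, f t :=
  Finset.sum_nbij' g g (by simp [mem_ofSize, hsize]) (by simp [mem_ofSize, hsize])
    (fun t _ => hg t) (fun t _ => hg t) fun _ _ => rfl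

end Sums

section Series

variable {R : Type*} [CommSemiring R]

noncomputable def series (w : Tern → R) : PowerSeries R :=
  PowerSeries.mk fun n => ∑ t ∈ ofSize n, w t

theorem series_comp_of_involutive (w : Tern → R) {g : Tern → Tern}
    (hg : Function.Involutive g) (hsize : ∀ t, (g t).size = t.size) :
    series (fun t => w (g t)) = series w := by
  ext n
  simp only [series, PowerSeries.coeff_mk]
  exact sum_ofSize_comp_of_involutive w hg hsize n

theorem coeff_series_mul_series_mul_series (a b c : Tern → R) (n : ℕ) :
    PowerSeries.coeff n (series a * series b * series c) =
      ∑ p ∈ tripleOfSize n, a p.1 * b p.2.1 * c p.2.2 := by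
  simp only [PowerSeries.coeff_mul, series, PowerSeries.coeff_mk, Finset.sum_mul,
    Finset.mul_sum]
  simp only [Finset.sum_sigma']
  refine Finset.sum_nbij' (fun x => (x.2.2.2.2, x.2.2.2.1, x.2.1))
    (fun p => ⟨(p.1.size + p.2.1.size, p.2.2.size), p.2.2, (p.1.size, p.2.1.size), p.2.1, p.1⟩)
    ?_ ?_ ?_ (fun _ _ => rfl) fun _ _ => rfl
  · rintro ⟨⟨i, j⟩, s₃, ⟨k, l⟩, s₂, s₁⟩ hx
    simp only [mem_sigma, HasAntidiagonal.mem_antidiagonal, mem_ofSize] at hx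
    rw [mem_tripleOfSize]
    dsimp only
    omega
  · intro p hp
    rw [mem_tripleOfSize] at hp
    simpa only [mem_sigma, HasAntidiagonal.mem_antidiagonal, mem_ofSize, and_true] using hp
  · rintro ⟨⟨i, j⟩, s₃, ⟨k, l⟩, s₂, s₁⟩ hx
    simp only [mem_sigma, HasAntidiagonal.mem_antidiagonal, mem_ofSize] at hx
    obtain ⟨rfl, rfl, rfl, rfl, rfl⟩ := hx
    rfl

end Series

local notation "d₁" => (MvPolynomial.X 0 : R3)
local notation "d₂" => (MvPolynomial.X 1 : R3)
local notation "d₃" => (MvPolynomial.X 2 : R3)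

noncomputable def weight (t : Tern) : R3 := d₁ ^ t.d1 * d₂ ^ t.d2 * d₃ ^ t.d3

theorem coeff_coeff_series_weight (n : ℕ) (m : Fin 3 →₀ ℕ) :
    MvPolynomial.coeff m (PowerSeries.coeff n (series weight)) =
      Nat.card {t : Tern // t.size = n ∧ t.d1 = m 0 ∧ t.d2 = m 1 ∧ t.d3 = m 2} := by
  simp only [series, PowerSeries.coeff_mk, MvPolynomial.coeff_sum, weight,
    MvPolynomial.coeff_X_pow_mul_X_pow_mul_X_pow, Finset.sum_boole]
  rw [← Set.ncard_coe_finset, ← Nat.card_coe_set_eq]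
  congr
  ext t
  simp only [coe_filter, mem_ofSize, Set.mem_ofPred_eq]
  rfl

theorem weight_node (s₁ s₂ s₃ : Tern) :
    (node s₁ s₂ s₃).weight = d₁ * d₂ * d₃ *
      (d₁ ^ s₁.labelSum 1 1 1 * d₂ ^ s₁.labelSum 1 0 1 * d₃ ^ s₁.labelSum 1 0 0) *
      (d₁ ^ s₂.labelSum 0 1 1 * d₂ ^ s₂.labelSum 0 1 1 * d₃ ^ s₂.labelSum 0 1 0) *
      (d₁ ^ s₃.labelSum 0 1 1 * d₂ ^ s₃.labelSum 0 0 1 * d₃ ^ s₃.labelSum 0 0 1) := by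
  simp only [weight, d1, d2, d3, labelSum, Nat.zero_min, add_zero, pow_add]
  ring

theorem sub1_series_weight : sub1 (series weight) = series fun t =>
    d₁ ^ t.labelSum 1 1 1 * d₂ ^ t.labelSum 1 0 1 * d₃ ^ t.labelSum 1 0 0 := by
  have h : sub1 (series weight) =
      series fun t => d₁ ^ t.size * aeval ![d₂, d₃, d₁] t.weight := by
    ext1 n
    simp only [sub1, series, PowerSeries.coeff_mk, map_sum, Finset.mul_sum]
    exact Finset.sum_congr rfl fun t ht => by rw [mem_ofSize.1 ht]
  rw [h, ← series_comp_of_involutive _ swap23_involutive size_swap23,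
    ← series_comp_of_involutive _ swap12_involutive size_swap12]
  congr 1
  funext t
  simp only [weight, d1, d2, d3, map_mul, map_pow, aeval_X, Matrix.cons_val_zero,
    Matrix.cons_val_one, Matrix.cons_val, size_swap12, size_swap23, labelSum_swap12,
    labelSum_swap23]
  rw [show t.labelSum 1 1 1 = t.labelSum 0 0 0 + t.size from labelSum_add_one t 0 0 0]
  ring

theorem sub2_series_weight : sub2 (series weight) = series fun t =>
    d₁ ^ t.labelSum 0 1 1 * d₂ ^ t.labelSum 0 0 1 * d₃ ^ t.labelSum 0 0 1 := by
  ext1 n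
  simp only [sub2, series, PowerSeries.coeff_mk, map_sum]
  refine Finset.sum_congr rfl fun t _ => ?_
  simp only [weight, d1, d2, map_mul, map_pow, aeval_X, Matrix.cons_val_zero,
    Matrix.cons_val_one, Matrix.cons_val, one_pow, mul_one]
  ring

theorem sub3_series_weight : sub3 (series weight) = series fun t =>
    d₁ ^ t.labelSum 0 1 1 * d₂ ^ t.labelSum 0 1 1 * d₃ ^ t.labelSum 0 1 0 := by
  have h : sub3 (series weight) = series fun t => aeval ![d₁ * d₂, d₃, 1] t.weight := by
    ext1 n
    simp only [sub3, series, PowerSeries.coeff_mk, map_sum]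
  rw [h, ← series_comp_of_involutive _ swap23_involutive size_swap23]
  congr 1
  funext t
  simp only [weight, d1, d2, map_mul, map_pow, aeval_X, Matrix.cons_val_zero,
    Matrix.cons_val_one, Matrix.cons_val, one_pow, mul_one, labelSum_swap23]
  ring

theorem series_weight_eq : series weight = 1 + PowerSeries.X * PowerSeries.C (d₁ * d₂ * d₃) *
    sub1 (series weight) * sub2 (series weight) * sub3 (series weight) := by
  rw [sub1_series_weight, sub2_series_weight, sub3_series_weight]
  ext1 (_ | n)
  · simp [series, ofSize_zero, weight, d1, d2, d3, labelSum]
  · -- the second child is counted by `sub3`, the third by `sub2`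
    rw [show ∀ (a : R3) (A B D : PowerSeries R3), PowerSeries.X * PowerSeries.C a * A * B * D =
          PowerSeries.X * (PowerSeries.C a * (A * D * B)) from fun _ _ _ _ => by ring,
      map_add, PowerSeries.coeff_one, if_neg n.succ_ne_zero, zero_add, PowerSeries.coeff_succ_X_mul,
      PowerSeries.coeff_C_mul, coeff_series_mul_series_mul_series, series, PowerSeries.coeff_mk,
      sum_ofSize_succ, Finset.mul_sum]
    refine Finset.sum_congr rfl fun p _ => ?_
    rw [weight_node]
    ring

end Tern

/-- The topological generating function
`Δ(z,d₁,d₂,d₃) = ∑_R d₁^{Δ₁(R)} d₂^{Δ₂(R)} d₃^{Δ₃(R)} z^{|R|}` (encoded as a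
power series in `z` with polynomial coefficients in `d₁,d₂,d₃`) satisfies
`Δ(z,d₁,d₂,d₃) = 1 + z d₁ d₂ d₃ · Δ(z d₁,d₂,d₃,d₁) · Δ(z,d₁,d₂d₃,1) · Δ(z,d₁d₂,d₃,1)`. -/
theorem topological_gf_equation (F : PowerSeries R3)
    (hF : ∀ (n : ℕ) (m : Fin 3 →₀ ℕ),
      MvPolynomial.coeff m (PowerSeries.coeff n F) =
        Nat.card {t : Tern // t.size = n ∧ t.d1 = m 0 ∧ t.d2 = m 1 ∧ t.d3 = m 2}) :
    F = 1 + PowerSeries.X *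
      PowerSeries.C (R := R3) (MvPolynomial.X 0 * MvPolynomial.X 1 * MvPolynomial.X 2) *
      sub1 F * sub2 F * sub3 F := by
  obtain rfl : F = Tern.series Tern.weight := by
    ext n m
    rw [hF, Tern.coeff_coeff_series_weight]
  exact Tern.series_weight_eq
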